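/- arXiv:2004.04712 — 4 statements merged into one kernel-verified Lean document; each statement's English description precedes it below -/
import Mathlib

section
/- Let G=(V_G,E_G) be a digraph with a 2-partition (V₁,V₂) of V_G such that every pair (u,v) with u ∈ V₁ and v ∈ V₂ is an arc of G. If A' satisfies the weak digraph constraint for G and V₁ ⊆ A', then A' ∩ V₂ satisfies the weak digraph constraint for the induced subdigraph G[V₂]. -/
/-- Given a 2-partition (V₁, V₂) of the vertices with all arcs from
V₁ to V₂ present, if A' satisfies the weak digraph constraint for G and
V₁ ⊆ A', then A' ∩ V₂ satisfies the weak digraph constraint for G[V₂]. -/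
theorem ssgw_partition {V : Type*} (E : V → V → Prop) (V₁ V₂ : Set V)
    (hpart : V₁ ∪ V₂ = Set.univ) (hdisj : Disjoint V₁ V₂)
    (hne₁ : V₁.Nonempty) (hne₂ : V₂.Nonempty)
    (harcs : ∀ u ∈ V₁, ∀ v ∈ V₂, E u v)
    (A' : Set V)
    (hwdc : ∀ y : V, ((∀ u : V, E u y → u ∈ A') ∧ (∃ u : V, E u y)) → y ∈ A')
    (hV₁ : V₁ ⊆ A') :
    ∀ y ∈ V₂,
      ((∀ u : V, u ∈ V₂ ∧ E u y → u ∈ A' ∩ V₂) ∧ (∃ u ∈ V₂, E u y)) →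
        y ∈ A' ∩ V₂ := by
  intro y hy ⟨hall, _⟩
  refine ⟨hwdc y ⟨fun u hu => ?_, ?_⟩, hy⟩
  · have : u ∈ V₁ ∪ V₂ := hpart ▸ Set.mem_univ u
    rcases this with h | h
    · exact hV₁ h
    · exact (hall u ⟨h, hu⟩).1
  · obtain ⟨w, hw⟩ := hne₁
    exact ⟨w, harcs w hw y hy⟩
end

section
/- Let G = G₁ ⊗ G₂ be the series composition of two vertex-disjoint nonempty digraphs G₁ and G₂ (arcs in both directions between all pairs of vertices from G₁ and G₂ are added). Then the only subsets of the vertex set of G satisfying the digraph constraint are the empty set and the full vertex set. -/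
/-- In the series composition G₁ ⊗ G₂ (arcs in both directions
between V₁ and V₂) of nonempty digraphs, the only subsets of the vertex set
satisfying the digraph constraint are ∅ and the full vertex set. -/
theorem ssg_series_composition_dicograph {V : Type*} (V₁ V₂ : Set V)
    (E₁ E₂ : V → V → Prop)
    (hdisj : Disjoint V₁ V₂) (hne₁ : V₁.Nonempty) (hne₂ : V₂.Nonempty)
    (hE₁ : ∀ u v : V, E₁ u v → u ∈ V₁ ∧ v ∈ V₁)
    (hE₂ : ∀ u v : V, E₂ u v → u ∈ V₂ ∧ v ∈ V₂)
    (A' : Set V) (hA' : A' ⊆ V₁ ∪ V₂)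
    (hdc : ∀ y ∈ V₁ ∪ V₂,
      (∃ u ∈ A', E₁ u y ∨ E₂ u y ∨ (u ∈ V₁ ∧ y ∈ V₂) ∨ (u ∈ V₂ ∧ y ∈ V₁)) →
        y ∈ A') :
    A' = ∅ ∨ A' = V₁ ∪ V₂ := by
  rcases A'.eq_empty_or_nonempty with h | ⟨a, ha⟩
  · exact Or.inl h
  right
  have haV := hA' ha
  -- every vertex on the opposite side of a is in A'
  have key : ∀ x ∈ V₁ ∪ V₂, x ∈ A' := by
    intro x hx
    rcases haV with ha1 | ha2
    · rcases hx with hx1 | hx2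
      · obtain ⟨b, hb⟩ := hne₂
        have hbA : b ∈ A' := hdc b (Or.inr hb) ⟨a, ha, Or.inr (Or.inr (Or.inl ⟨ha1, hb⟩))⟩
        exact hdc x (Or.inl hx1) ⟨b, hbA, Or.inr (Or.inr (Or.inr ⟨hb, hx1⟩))⟩
      · exact hdc x (Or.inr hx2) ⟨a, ha, Or.inr (Or.inr (Or.inl ⟨ha1, hx2⟩))⟩
    · rcases hx with hx1 | hx2
      · exact hdc x (Or.inl hx1) ⟨a, ha, Or.inr (Or.inr (Or.inr ⟨ha2, hx1⟩))⟩
      · obtain ⟨b, hb⟩ := hne₁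
        have hbA : b ∈ A' := hdc b (Or.inl hb) ⟨a, ha, Or.inr (Or.inr (Or.inr ⟨ha2, hb⟩))⟩
        exact hdc x (Or.inr hx2) ⟨b, hbA, Or.inr (Or.inr (Or.inl ⟨hb, hx2⟩))⟩
  exact Set.Subset.antisymm hA' key
end

section
/- Let G = G₁ ⊘ G₂ be the order composition of two vertex-disjoint digraphs. A set A' satisfies the digraph constraint for G if and only if either (i) A' ⊆ V₂ and A' satisfies the digraph constraint for G₂, or (ii) A' ∩ V₁ ≠ ∅, V₂ ⊆ A', and A' ∩ V₁ satisfies the digraph constraint for G₁. -/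
/-- For the order composition G₁ ⊘ G₂, a set A' ⊆ V₁ ∪ V₂
satisfies the digraph constraint iff either A' ⊆ V₂ and A' satisfies the digraph
constraint for G₂, or A' meets V₁, V₂ ⊆ A', and A' ∩ V₁ satisfies the digraph
constraint for G₁. -/
theorem ssg_order_composition_characterization {V : Type*} (V₁ V₂ : Set V)
    (E₁ E₂ : V → V → Prop)
    (hdisj : Disjoint V₁ V₂) (hne₁ : V₁.Nonempty) (hne₂ : V₂.Nonempty)
    (hE₁ : ∀ u v : V, E₁ u v → u ∈ V₁ ∧ v ∈ V₁)
    (hE₂ : ∀ u v : V, E₂ u v → u ∈ V₂ ∧ v ∈ V₂)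
    (A' : Set V) (hA' : A' ⊆ V₁ ∪ V₂) :
    (∀ y ∈ V₁ ∪ V₂,
        (∃ u ∈ A', E₁ u y ∨ E₂ u y ∨ (u ∈ V₁ ∧ y ∈ V₂)) → y ∈ A') ↔
      ((A' ⊆ V₂ ∧ ∀ y ∈ V₂, (∃ u ∈ A', E₂ u y) → y ∈ A') ∨
       ((A' ∩ V₁).Nonempty ∧ V₂ ⊆ A' ∧
        ∀ y ∈ V₁, (∃ u ∈ A' ∩ V₁, E₁ u y) → y ∈ A' ∩ V₁)) := by
  constructor
  · intro h
    rcases Set.eq_empty_or_nonempty (A' ∩ V₁) with he | hne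
    · left
      have hsub : A' ⊆ V₂ := by
        intro x hx
        rcases hA' hx with h1 | h2
        · exact absurd (Set.mem_inter hx h1) (by simp [he])
        · exact h2
      refine ⟨hsub, fun y hy ⟨u, hu, hE⟩ => ?_⟩
      exact h y (Or.inr hy) ⟨u, hu, Or.inr (Or.inl hE)⟩
    · right
      refine ⟨hne, ?_, ?_⟩
      · intro y hy
        obtain ⟨u, huA, huV⟩ := hne
        exact h y (Or.inr hy) ⟨u, huA, Or.inr (Or.inr ⟨huV, hy⟩)⟩
      · intro y hy ⟨u, hu, hE⟩
        exact ⟨h y (Or.inl hy) ⟨u, hu.1, Or.inl hE⟩, hy⟩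
  · rintro (⟨hsub, h2⟩ | ⟨hne, hV2, h1⟩) y hy ⟨u, hu, hE⟩
    · rcases hE with hE | hE | ⟨huV, hyV⟩
      · exact absurd (hE₁ u y hE).1 (Set.disjoint_left.mp hdisj.symm (hsub hu))
      · exact h2 y (hE₂ u y hE).2 ⟨u, hu, hE⟩
      · exact absurd huV (Set.disjoint_left.mp hdisj.symm (hsub hu))
    · rcases hE with hE | hE | ⟨huV, hyV⟩
      · exact (h1 y (hE₁ u y hE).2 ⟨u, ⟨hu, (hE₁ u y hE).1⟩, hE⟩).1
      · exact hV2 (hE₂ u y hE).2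
      · exact hV2 hyV
end

section
/- Let G = G₁ × G₂ be the series composition of two vertex-disjoint minimal series-parallel digraphs G₁ and G₂ with nonempty vertex sets. If A' is a nonempty subset of the vertex set of G satisfying the digraph constraint and A' contains at least one vertex of G₁, then A' contains every vertex of G₂. -/
/-!
Every vertex of a minimal series-parallel digraph reaches a sink and is reached from a source;
the second fact is the first one for the reversed digraph, which is again minimal
series-parallel. Hence a vertex of `A'` in `G₁` reaches a sink `s` of `G₁`, and every
`v ∈ V(G₂)` is reached from a source `t` of `G₂`. The arc `(s, t)` of `G₁ × G₂` joins these
paths, and the digraph constraint propagates membership in `A'` along every arc.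
-/

/-- A digraph given by a vertex set and an arc set. -/
structure Digr (α : Type*) where
  V : Set α
  E : Set (α × α)

/-- Sinks: vertices with outdegree 0. -/
def Digr.sinks {α : Type*} (G : Digr α) : Set α :=
  {v | v ∈ G.V ∧ ∀ w : α, (v, w) ∉ G.E}

/-- Sources: vertices with indegree 0. -/
def Digr.sources {α : Type*} (G : Digr α) : Set α :=
  {v | v ∈ G.V ∧ ∀ u : α, (u, v) ∉ G.E}

/-- Parallel composition: disjoint union. -/
def Digr.parComp {α : Type*} (G₁ G₂ : Digr α) : Digr α :=
  ⟨G₁.V ∪ G₂.V, G₁.E ∪ G₂.E⟩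

/-- Series composition: disjoint union plus all arcs from sinks of G₁ to
sources of G₂. -/
def Digr.serComp {α : Type*} (G₁ G₂ : Digr α) : Digr α :=
  ⟨G₁.V ∪ G₂.V,
    G₁.E ∪ G₂.E ∪ {p : α × α | p.1 ∈ G₁.sinks ∧ p.2 ∈ G₂.sources}⟩

/-- Minimal series-parallel digraphs. -/
inductive IsMSP {α : Type*} : Digr α → Prop
  | single (v : α) : IsMSP ⟨{v}, ∅⟩
  | par {G₁ G₂ : Digr α} : IsMSP G₁ → IsMSP G₂ → Disjoint G₁.V G₂.V →
      IsMSP (G₁.parComp G₂)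
  | ser {G₁ G₂ : Digr α} : IsMSP G₁ → IsMSP G₂ → Disjoint G₁.V G₂.V →
      IsMSP (G₁.serComp G₂)

/-- Reachability by a directed path (possibly of length 0). -/
def Digr.reach {α : Type*} (G : Digr α) (u v : α) : Prop :=
  Relation.ReflTransGen (fun a b => (a, b) ∈ G.E) u v

namespace Digr

variable {α : Type*} {G H G₁ G₂ : Digr α} {u v s t : α}

theorem reach.mono (hE : G.E ⊆ H.E) (h : G.reach u v) : H.reach u v :=
  Relation.ReflTransGen.mono (fun _ _ hab => hE hab) u v h

theorem reach.mem_of_forall_mem {A : Set α} (hA : ∀ a ∈ A, ∀ b, (a, b) ∈ G.E → b ∈ A)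
    (h : G.reach u v) (hu : u ∈ A) : v ∈ A := by
  induction h with
  | refl => exact hu
  | tail _ hbc ih => exact hA _ ih _ hbc

theorem reach_serComp (h₁ : G₁.reach u s) (hs : s ∈ G₁.sinks) (ht : t ∈ G₂.sources)
    (h₂ : G₂.reach t v) : (G₁.serComp G₂).reach u v :=
  ((h₁.mono (H := G₁.serComp G₂) fun _ hp => Or.inl (Or.inl hp)).tail (Or.inr ⟨hs, ht⟩)).trans
    (h₂.mono (H := G₁.serComp G₂) fun _ hp => Or.inl (Or.inr hp))

theorem snd_mem_serComp (h₁ : ∀ p ∈ G₁.E, p.2 ∈ G₁.V) (h₂ : ∀ p ∈ G₂.E, p.2 ∈ G₂.V)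
    {p : α × α} (hp : p ∈ (G₁.serComp G₂).E) : p.2 ∈ (G₁.serComp G₂).V := by
  rcases hp with (hp | hp) | hp
  · exact Or.inl (h₁ p hp)
  · exact Or.inr (h₂ p hp)
  · exact Or.inr hp.2.1

structure IsOutClosed (G H : Digr α) : Prop where
  V_subset : G.V ⊆ H.V
  E_subset : G.E ⊆ H.E
  mem_E : ∀ {a b : α}, a ∈ G.V → (a, b) ∈ H.E → (a, b) ∈ G.E

theorem IsOutClosed.sinks_subset (h : G.IsOutClosed H) : G.sinks ⊆ H.sinks :=
  fun _ ⟨hs, hout⟩ => ⟨h.V_subset hs, fun w hw => hout w (h.mem_E hs hw)⟩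

theorem IsOutClosed.exists_sink_reach (h : G.IsOutClosed H) (hv : ∃ s ∈ G.sinks, G.reach v s) :
    ∃ s ∈ H.sinks, H.reach v s :=
  let ⟨s, hs, hvs⟩ := hv
  ⟨s, h.sinks_subset hs, hvs.mono h.E_subset⟩

theorem isOutClosed_parComp_left (hd : Disjoint G₁.V G₂.V) (h₂ : ∀ p ∈ G₂.E, p.1 ∈ G₂.V) :
    G₁.IsOutClosed (G₁.parComp G₂) where
  V_subset := Set.subset_union_left
  E_subset := Set.subset_union_left
  mem_E ha hab := hab.resolve_right fun hab₂ => hd.ne_of_mem ha (h₂ _ hab₂) rfl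

theorem isOutClosed_parComp_right (hd : Disjoint G₁.V G₂.V) (h₁ : ∀ p ∈ G₁.E, p.1 ∈ G₁.V) :
    G₂.IsOutClosed (G₁.parComp G₂) where
  V_subset := Set.subset_union_right
  E_subset := Set.subset_union_right
  mem_E ha hab := hab.resolve_left fun hab₁ => hd.ne_of_mem (h₁ _ hab₁) ha rfl

theorem isOutClosed_serComp_right (hd : Disjoint G₁.V G₂.V) (h₁ : ∀ p ∈ G₁.E, p.1 ∈ G₁.V) :
    G₂.IsOutClosed (G₁.serComp G₂) where
  V_subset := Set.subset_union_right
  E_subset := fun _ hp => Or.inl (Or.inr hp)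
  mem_E ha hab := by
    rcases hab with (hab | hab) | hab
    · exact absurd rfl (hd.ne_of_mem (h₁ _ hab) ha)
    · exact hab
    · exact absurd rfl (hd.ne_of_mem hab.1.1 ha)

def reverse (G : Digr α) : Digr α :=
  ⟨G.V, Prod.swap ⁻¹' G.E⟩

theorem sinks_reverse : G.reverse.sinks = G.sources := rfl

theorem reach_reverse : G.reverse.reach u v ↔ G.reach v u :=
  Relation.reflTransGen_swap

theorem reverse_parComp : (G₁.parComp G₂).reverse = G₂.reverse.parComp G₁.reverse := by
  simp only [reverse, parComp, Set.preimage_union, Set.union_comm]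

theorem reverse_serComp : (G₁.serComp G₂).reverse = G₂.reverse.serComp G₁.reverse := by
  simp only [reverse, serComp, mk.injEq, Set.union_comm G₁.V, true_and]
  ext ⟨a, b⟩
  simp only [Set.mem_preimage, Set.mem_union, Set.mem_ofPred_eq, Prod.swap_prod_mk]
  tauto

end Digr

namespace IsMSP

variable {α : Type*} {G : Digr α}

theorem mem_V_of_mem_E (hG : IsMSP G) {p : α × α} (hp : p ∈ G.E) : p.1 ∈ G.V ∧ p.2 ∈ G.V := by
  induction hG with
  | single v => exact absurd hp (Set.notMem_empty p)
  | par _ _ _ ih₁ ih₂ =>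
    rcases hp with hp | hp
    · exact (ih₁ hp).imp .inl .inl
    · exact (ih₂ hp).imp .inr .inr
  | ser _ _ _ ih₁ ih₂ =>
    rcases hp with (hp | hp) | hp
    · exact (ih₁ hp).imp .inl .inl
    · exact (ih₂ hp).imp .inr .inr
    · exact ⟨.inl hp.1.1, .inr hp.2.1⟩

theorem fst_mem (hG : IsMSP G) : ∀ p ∈ G.E, p.1 ∈ G.V := fun _ hp => (hG.mem_V_of_mem_E hp).1

theorem snd_mem (hG : IsMSP G) : ∀ p ∈ G.E, p.2 ∈ G.V := fun _ hp => (hG.mem_V_of_mem_E hp).2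

theorem reverse (hG : IsMSP G) : IsMSP G.reverse := by
  induction hG with
  | single v => exact single v
  | par _ _ hd ih₁ ih₂ => exact Digr.reverse_parComp ▸ par ih₂ ih₁ hd.symm
  | ser _ _ hd ih₁ ih₂ => exact Digr.reverse_serComp ▸ ser ih₂ ih₁ hd.symm

theorem sinks_nonempty (hG : IsMSP G) : G.sinks.Nonempty := by
  induction hG with
  | single v => exact ⟨v, rfl, fun _ => id⟩
  | par _ h₂ hd ih₁ _ =>
    exact ih₁.mono (Digr.isOutClosed_parComp_left hd h₂.fst_mem).sinks_subset
  | ser h₁ _ hd _ ih₂ =>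
    exact ih₂.mono (Digr.isOutClosed_serComp_right hd h₁.fst_mem).sinks_subset

theorem sources_nonempty (hG : IsMSP G) : G.sources.Nonempty :=
  hG.reverse.sinks_nonempty

theorem exists_sink_reach (hG : IsMSP G) : ∀ v ∈ G.V, ∃ s ∈ G.sinks, G.reach v s := by
  induction hG with
  | single v => exact fun x hx => ⟨v, ⟨rfl, fun _ => id⟩, hx ▸ .refl⟩
  | par h₁ h₂ hd ih₁ ih₂ =>
    rintro v (hv | hv)
    · exact (Digr.isOutClosed_parComp_left hd h₂.fst_mem).exists_sink_reach (ih₁ v hv)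
    · exact (Digr.isOutClosed_parComp_right hd h₁.fst_mem).exists_sink_reach (ih₂ v hv)
  | ser h₁ h₂ hd ih₁ ih₂ =>
    have hout := Digr.isOutClosed_serComp_right hd h₁.fst_mem
    rintro v (hv | hv)
    · obtain ⟨s₁, hs₁, hvs₁⟩ := ih₁ v hv
      obtain ⟨t, ht⟩ := h₂.sources_nonempty
      obtain ⟨s₂, hs₂, hts₂⟩ := ih₂ t ht.1
      exact ⟨s₂, hout.sinks_subset hs₂, Digr.reach_serComp hvs₁ hs₁ ht hts₂⟩
    · exact hout.exists_sink_reach (ih₂ v hv)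

theorem exists_source_reach (hG : IsMSP G) : ∀ v ∈ G.V, ∃ s ∈ G.sources, G.reach s v :=
  fun v hv => by
    simpa only [Digr.reach_reverse, Digr.sinks_reverse] using hG.reverse.exists_sink_reach v hv

end IsMSP

theorem msp_series_feasible_contains_second_general {α : Type*} (G₁ G₂ : Digr α)
    (hG₁ : IsMSP G₁) (hG₂ : IsMSP G₂)
    (A' : Set α)
    (hdc : ∀ y ∈ (G₁.serComp G₂).V,
      (∃ u ∈ A', (u, y) ∈ (G₁.serComp G₂).E) → y ∈ A')
    (hmeet : (A' ∩ G₁.V).Nonempty) :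
    G₂.V ⊆ A' := by
  have hclosed : ∀ a ∈ A', ∀ b, (a, b) ∈ (G₁.serComp G₂).E → b ∈ A' := fun a ha b hab =>
    hdc b (Digr.snd_mem_serComp hG₁.snd_mem hG₂.snd_mem hab) ⟨a, ha, hab⟩
  obtain ⟨x, hxA, hx⟩ := hmeet
  obtain ⟨s, hs, hxs⟩ := hG₁.exists_sink_reach x hx
  intro v hv
  obtain ⟨t, ht, htv⟩ := hG₂.exists_source_reach v hv
  exact (Digr.reach_serComp hxs hs ht htv).mem_of_forall_mem hclosed hxA

/-- In the series composition G₁ × G₂ of nonempty minimal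
series-parallel digraphs, any nonempty feasible set for the digraph constraint
that meets V(G₁) contains all of V(G₂). -/
theorem msp_series_feasible_contains_second {α : Type*} (G₁ G₂ : Digr α)
    (hG₁ : IsMSP G₁) (hG₂ : IsMSP G₂) (hdisj : Disjoint G₁.V G₂.V)
    (hne₁ : G₁.V.Nonempty) (hne₂ : G₂.V.Nonempty)
    (A' : Set α) (hsub : A' ⊆ (G₁.serComp G₂).V) (hne : A'.Nonempty)
    (hdc : ∀ y ∈ (G₁.serComp G₂).V,
      (∃ u ∈ A', (u, y) ∈ (G₁.serComp G₂).E) → y ∈ A')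
    (hmeet : (A' ∩ G₁.V).Nonempty) :
    G₂.V ⊆ A' :=
  msp_series_feasible_contains_second_general G₁ G₂ hG₁ hG₂ A' hdc hmeet
end
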